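/- Let A be a real symmetric positive definite l×l matrix, f(x) = Ax − (xᵀAx)x, and v(x) = e^{‖x‖²}/(xᵀAx) for x ≠ 0. Then the gradient of v satisfies ∇v(x) = (2v(x)/(xᵀAx))·((xᵀAx)x − Ax), and consequently f(x)ᵀ∇v(x) = −(2v(x)/(xᵀAx))·‖f(x)‖², which is strictly negative whenever f(x) ≠ 0. -/

import Mathlib

/-! With `q y = ⟪y, A y⟫`, we have `∇‖y‖² = 2y` and, `A` being symmetric, `∇q = 2Ay`; the
quotient rule then gives `∇v = (2v/q)(q x - A x) = -(2v/q) f x`. Pairing with `f x` and using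
`q > 0` (positive definiteness) gives the sign. -/

open Matrix
open scoped RealInnerProductSpace

/-- View a plain vector in `Fin l → ℝ` as a point of Euclidean space. -/
noncomputable def toE {l : ℕ} (y : Fin l → ℝ) : EuclideanSpace ℝ (Fin l) :=
  (WithLp.equiv 2 (Fin l → ℝ)).symm y

section Gradient

variable {E : Type*} [NormedAddCommGroup E] [InnerProductSpace ℝ E] [CompleteSpace E]
  {u w : E → ℝ} {gu gw x : E}

theorem HasGradientAt.exp (hu : HasGradientAt u gu x) :
    HasGradientAt (fun y => Real.exp (u y)) (Real.exp (u x) • gu) x := by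
  rw [hasGradientAt_iff_hasFDerivAt, map_smul]
  exact hu.hasFDerivAt.exp

theorem HasGradientAt.div (hu : HasGradientAt u gu x) (hw : HasGradientAt w gw x)
    (hx : w x ≠ 0) :
    HasGradientAt (fun y => u y / w y) ((w x ^ 2)⁻¹ • (w x • gu - u x • gw)) x := by
  have hinv := (hasDerivAt_inv hx).comp_hasFDerivAt x hw.hasFDerivAt
  refine (hu.hasFDerivAt.mul hinv).congr_fderiv ?_
  ext h
  simp only [Function.comp_apply, _root_.add_apply, _root_.smul_apply, neg_smul, _root_.neg_apply,
    InnerProductSpace.toDual_apply_apply, smul_eq_mul, map_smul, map_sub, _root_.sub_apply]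
  field_simp
  ring

theorem hasGradientAt_norm_sq (x : E) : HasGradientAt (fun y => ‖y‖ ^ 2) ((2 : ℝ) • x) x := by
  refine ((hasFDerivAt_id x).norm_sq).congr_fderiv ?_
  ext h
  simp

theorem hasGradientAt_inner_self_apply {T : E →L[ℝ] E} (hT : (T : E →ₗ[ℝ] E).IsSymmetric)
    (x : E) : HasGradientAt (fun y => ⟪y, T y⟫) ((2 : ℝ) • T x) x := by
  refine ((hasFDerivAt_id x).inner ℝ T.hasFDerivAt).congr_fderiv ?_
  ext h
  simp only [id_eq, ContinuousLinearMap.comp_apply, ContinuousLinearMap.prod_apply,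
    ContinuousLinearMap.id_apply, fderivInnerCLM_apply, map_smul, _root_.smul_apply,
    InnerProductSpace.toDual_apply_apply, smul_eq_mul]
  rw [real_inner_comm (T x), show ⟪T x, h⟫ = ⟪x, T h⟫ from hT x h]
  ring

theorem hasGradientAt_exp_norm_sq_div_inner_self_apply {T : E →L[ℝ] E}
    (hT : (T : E →ₗ[ℝ] E).IsSymmetric) (hx : ⟪x, T x⟫ ≠ 0) :
    HasGradientAt (fun y => Real.exp (‖y‖ ^ 2) / ⟪y, T y⟫)
      ((2 * (Real.exp (‖x‖ ^ 2) / ⟪x, T x⟫) / ⟪x, T x⟫) • (⟪x, T x⟫ • x - T x)) x := by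
  convert (hasGradientAt_norm_sq x).exp.div (hasGradientAt_inner_self_apply hT x) hx using 1
  match_scalars <;> field_simp

end Gradient

theorem Matrix.PosDef.inner_toEuclideanCLM_self_pos {n : Type*} [Fintype n] [DecidableEq n]
    {A : Matrix n n ℝ} (hA : A.PosDef) {x : EuclideanSpace ℝ n} (hx : x ≠ 0) :
    0 < ⟪x, toEuclideanCLM (𝕜 := ℝ) A x⟫ := by
  rw [inner_toEuclideanCLM]
  simpa using hA.dotProduct_mulVec_pos (x := WithLp.ofLp x) (by simpa using hx)

theorem stmt4_general {l : ℕ} (A : Matrix (Fin l) (Fin l) ℝ) (hpd : A.PosDef)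
    (v : EuclideanSpace ℝ (Fin l) → ℝ)
    (hv : ∀ x : EuclideanSpace ℝ (Fin l), x ≠ 0 →
      v x = Real.exp (‖x‖ ^ 2) / ⟪x, toE (A.mulVec (WithLp.equiv 2 (Fin l → ℝ) x))⟫)
    (f : EuclideanSpace ℝ (Fin l) → EuclideanSpace ℝ (Fin l))
    (hf : ∀ x : EuclideanSpace ℝ (Fin l),
      f x = toE (A.mulVec (WithLp.equiv 2 (Fin l → ℝ) x)) -
        ⟪x, toE (A.mulVec (WithLp.equiv 2 (Fin l → ℝ) x))⟫ • x)
    (x : EuclideanSpace ℝ (Fin l)) (hx : x ≠ 0) :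
    gradient v x = (2 * v x / ⟪x, toE (A.mulVec (WithLp.equiv 2 (Fin l → ℝ) x))⟫) •
        (⟪x, toE (A.mulVec (WithLp.equiv 2 (Fin l → ℝ) x))⟫ • x -
          toE (A.mulVec (WithLp.equiv 2 (Fin l → ℝ) x))) ∧
      ⟪f x, gradient v x⟫ =
        -(2 * v x / ⟪x, toE (A.mulVec (WithLp.equiv 2 (Fin l → ℝ) x))⟫) * ‖f x‖ ^ 2 ∧
      (f x ≠ 0 → ⟪f x, gradient v x⟫ < 0) := by
  set T := toEuclideanCLM (𝕜 := ℝ) A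
  have hT : ∀ y, toE (A.mulVec (WithLp.equiv 2 (Fin l → ℝ) y)) = T y := fun _ => rfl
  simp only [hT] at hv hf ⊢
  have hq : 0 < ⟪x, T x⟫ := hpd.inner_toEuclideanCLM_self_pos hx
  have hv_pos : 0 < v x := hv x hx ▸ div_pos (Real.exp_pos _) hq
  have hgrad : gradient v x = (2 * v x / ⟪x, T x⟫) • (⟪x, T x⟫ • x - T x) := by
    have hv_near : v =ᶠ[nhds x] fun y => Real.exp (‖y‖ ^ 2) / ⟪y, T y⟫ :=
      eventually_ne_nhds hx |>.mono hv
    rw [hv x hx]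
    exact ((hasGradientAt_exp_norm_sq_div_inner_self_apply
      (isSymmetric_toEuclideanLin_iff.mpr hpd.isHermitian) hq.ne').congr_of_eventuallyEq
      hv_near).gradient
  have hinner : ⟪f x, gradient v x⟫ = -(2 * v x / ⟪x, T x⟫) * ‖f x‖ ^ 2 := by
    rw [hgrad, ← neg_sub, ← hf, inner_smul_right, inner_neg_right, real_inner_self_eq_norm_sq]
    ring
  refine ⟨hgrad, hinner, fun hf_ne => ?_⟩
  rw [hinner, neg_mul, neg_lt_zero]
  exact mul_pos (by positivity) (by positivity)

/-- For `A` symmetric positive definite, `f x = Ax - (xᵀAx)x` and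
`v x = exp(‖x‖²)/(xᵀAx)` (for `x ≠ 0`), the gradient of `v` satisfies
`∇v(x) = (2 v(x)/(xᵀAx)) ((xᵀAx)x - Ax)`, whence
`⟪f x, ∇v(x)⟫ = -(2 v(x)/(xᵀAx)) ‖f x‖²`, strictly negative whenever `f x ≠ 0`. -/
theorem stmt4 {l : ℕ} (A : Matrix (Fin l) (Fin l) ℝ) (hsymm : A.IsSymm) (hpd : A.PosDef)
    (v : EuclideanSpace ℝ (Fin l) → ℝ)
    (hv : ∀ x : EuclideanSpace ℝ (Fin l), x ≠ 0 →
      v x = Real.exp (‖x‖ ^ 2) / ⟪x, toE (A.mulVec (WithLp.equiv 2 (Fin l → ℝ) x))⟫)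
    (f : EuclideanSpace ℝ (Fin l) → EuclideanSpace ℝ (Fin l))
    (hf : ∀ x : EuclideanSpace ℝ (Fin l),
      f x = toE (A.mulVec (WithLp.equiv 2 (Fin l → ℝ) x)) -
        ⟪x, toE (A.mulVec (WithLp.equiv 2 (Fin l → ℝ) x))⟫ • x)
    (x : EuclideanSpace ℝ (Fin l)) (hx : x ≠ 0) :
    gradient v x = (2 * v x / ⟪x, toE (A.mulVec (WithLp.equiv 2 (Fin l → ℝ) x))⟫) •
        (⟪x, toE (A.mulVec (WithLp.equiv 2 (Fin l → ℝ) x))⟫ • x -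
          toE (A.mulVec (WithLp.equiv 2 (Fin l → ℝ) x))) ∧
      ⟪f x, gradient v x⟫ =
        -(2 * v x / ⟪x, toE (A.mulVec (WithLp.equiv 2 (Fin l → ℝ) x))⟫) * ‖f x‖ ^ 2 ∧
      (f x ≠ 0 → ⟪f x, gradient v x⟫ < 0) :=
  stmt4_general A hpd v hv f hf x hx
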